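/- Fix λ > 0 and let (α_t) be as above (α_{t+1} maximizes log α − λ·KL(Ber(α)‖Ber(α_t)), α_0 ∈ (0,1)). Then for every ε ∈ (0,1) and every natural number t with t ≥ −λ·log(ε·α_0), we have α_t ≥ 1 − ε. -/

import Mathlib

/-!
The maximizer `α_{t+1}` is an interior critical point of `g λ α_t`, and the derivative of `g λ a`
at `x` is `1/x - λ (logit x - logit a)`. Since `1/x ≥ 1` on `(0, 1)`, every step raises the logit by
at least `1/λ`, so `logit α_t ≥ logit α_0 + t/λ ≥ log α_0 + t/λ`. Finally
`1 - α ≤ (1 - α)/α = exp (-logit α)`, which is at most `ε` once `t ≥ -λ log (ε α_0)`.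
-/

/-- g(α) = log α − λ·KL(Ber(α)‖Ber(a)). -/
noncomputable def g (lam a : ℝ) : ℝ → ℝ :=
  fun α => Real.log α -
    lam * (α * Real.log (α / a) + (1 - α) * Real.log ((1 - α) / (1 - a)))

open Real Set

noncomputable def logit (x : ℝ) : ℝ := log x - log (1 - x)

lemma hasDerivAt_g {lam a x : ℝ} (ha : a ∈ Ioo (0 : ℝ) 1) (hx : x ∈ Ioo (0 : ℝ) 1) :
    HasDerivAt (g lam a) (x⁻¹ - lam * (logit x - logit a)) x := by
  obtain ⟨ha0, ha1⟩ := ha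
  obtain ⟨hx0, hx1⟩ := hx
  have hpos := ((hasDerivAt_id' x).div_const a).log (div_pos hx0 ha0).ne'
  have hneg := (((hasDerivAt_id' x).const_sub 1).div_const (1 - a)).log
    (div_pos (sub_pos.2 hx1) (sub_pos.2 ha1)).ne'
  have hderiv := (hasDerivAt_log hx0.ne').sub ((((hasDerivAt_id' x).mul hpos).add
    (((hasDerivAt_id' x).const_sub 1).mul hneg)).const_mul lam)
  refine hderiv.congr_deriv ?_
  rw [logit, logit, log_div hx0.ne' ha0.ne', log_div (sub_pos.2 hx1).ne' (sub_pos.2 ha1).ne']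
  field_simp
  ring

lemma logit_add_inv_le_of_isLocalMax {lam a x : ℝ} (hlam : 0 < lam) (ha : a ∈ Ioo (0 : ℝ) 1)
    (hx : x ∈ Ioo (0 : ℝ) 1) (hmax : IsLocalMax (g lam a) x) : logit a + lam⁻¹ ≤ logit x := by
  have hcrit : x⁻¹ = lam * (logit x - logit a) :=
    sub_eq_zero.1 (hmax.hasDerivAt_eq_zero (hasDerivAt_g ha hx))
  have hinv : 1 ≤ x⁻¹ := one_le_inv₀ hx.1 |>.2 hx.2.le
  have : lam⁻¹ ≤ logit x - logit a := by
    rw [inv_le_iff_one_le_mul₀' hlam]; linarith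
  linarith

lemma add_mul_le_of_add_le_succ {u : ℕ → ℝ} {c : ℝ} (h : ∀ t, u t + c ≤ u (t + 1)) (t : ℕ) :
    u 0 + t * c ≤ u t := by
  induction t with
  | zero => simp
  | succ t ih => push_cast; linarith [h t]

lemma log_le_logit {x : ℝ} (hx : x ∈ Ioo (0 : ℝ) 1) : log x ≤ logit x := by
  have : log (1 - x) ≤ 0 := log_nonpos (by linarith [hx.2]) (by linarith [hx.1])
  unfold logit; linarith

lemma one_sub_le_exp_neg_logit {x : ℝ} (hx : x ∈ Ioo (0 : ℝ) 1) : 1 - x ≤ exp (-logit x) := by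
  obtain ⟨hx0, hx1⟩ := hx
  rw [logit, neg_sub, ← log_div (sub_pos.2 hx1).ne' hx0.ne', exp_log (div_pos (sub_pos.2 hx1) hx0)]
  exact le_div_self (sub_pos.2 hx1).le hx0 hx1.le

/-- Convergence-rate bound: α_t ≥ 1 − ε whenever t ≥ −λ·log(ε·α_0). -/
theorem iterates_rate_bound
    (lam : ℝ) (hlam : 0 < lam)
    (α : ℕ → ℝ) (h0 : α 0 ∈ Set.Ioo (0:ℝ) 1)
    (hmem : ∀ t, α (t + 1) ∈ Set.Ioo (0:ℝ) 1)
    (hrec : ∀ t, ∀ β ∈ Set.Ioo (0:ℝ) 1, g lam (α t) β ≤ g lam (α t) (α (t + 1))) :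
    ∀ ε ∈ Set.Ioo (0:ℝ) 1, ∀ t : ℕ,
      -lam * Real.log (ε * α 0) ≤ (t : ℝ) → 1 - ε ≤ α t := by
  have hα : ∀ t, α t ∈ Ioo (0 : ℝ) 1
    | 0 => h0
    | t + 1 => hmem t
  have hstep (t : ℕ) : logit (α t) + lam⁻¹ ≤ logit (α (t + 1)) :=
    logit_add_inv_le_of_isLocalMax hlam (hα t) (hmem t)
      (Filter.eventually_of_mem (isOpen_Ioo.mem_nhds (hmem t)) (hrec t))
  intro ε ⟨hε0, _⟩ t ht
  have hlogit : -log ε ≤ logit (α t) := by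
    have hgrowth := add_mul_le_of_add_le_succ hstep t
    have hstart := log_le_logit h0
    rw [log_mul hε0.ne' h0.1.ne'] at ht
    have : -log ε - log (α 0) ≤ t * lam⁻¹ := by
      rw [← div_eq_mul_inv, le_div_iff₀ hlam]; linarith
    linarith
  have hgap : 1 - α t ≤ ε :=
    calc 1 - α t ≤ exp (-logit (α t)) := one_sub_le_exp_neg_logit (hα t)
      _ ≤ exp (log ε) := exp_le_exp.2 (by linarith)
      _ = ε := exp_log hε0
  linarith
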